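/- arXiv:2212.02696 — 5 statements merged into one kernel-verified Lean document; each statement's English description precedes it below -/
import Mathlib

section
/- With notation as above, δ(I) = I if and only if −𝐝 ∈ S and Exp I ∩ V_mon(f) = Exp I \ (Exp I − 𝐝), where V_mon(f) = {𝐚 ∈ ℤ^d : f(𝐚) = 0}. -/
/-!
Rescaling a monomial by a nonzero scalar does not change the span and zero terms drop out, so
`δ(I)` is spanned by the monomials `x^(a + d)` with `a ∈ Exp I`, `f(a) ≠ 0`; spans of monomials
agree exactly when their exponent sets do. Hence `δ(I) = I` says that translating
`{a ∈ Exp I | f(a) ≠ 0}` by `d` gives `Exp I`, i.e. `Exp I - d ⊆ Exp I` and, inside `Exp I`,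
the zeros of `f` are exactly the complement of `Exp I - d`. Finally `Exp I - d ⊆ Exp I` is
equivalent to `-d ∈ S`.
-/

open Finsupp Submodule

section SpanOfSingles

variable {K α β : Type*}

theorem span_single_one_image_inj [Semiring K] [Nontrivial K] {s t : Set α} :
    span K ((single · (1 : K)) '' s) = span K ((single · (1 : K)) '' t) ↔ s = t :=
  ⟨fun h => Set.ext fun _ => by rw [← single_mem_span_single (R := K), h, single_mem_span_single],
    fun h => h ▸ rfl⟩

theorem span_single_image_eq_span_single_one [DivisionRing K] (g : β → α) (F : β → K)
    (E : Set β) :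
    span K ((fun a => single (g a) (F a)) '' E) =
      span K ((single · (1 : K)) '' (g '' {a ∈ E | F a ≠ 0})) := by
  apply le_antisymm <;> rw [span_le]
  · rintro _ ⟨a, ha, rfl⟩
    by_cases hFa : F a = 0
    · simp [hFa]
    · show single (g a) (F a) ∈ _
      rw [← smul_single_one]
      exact smul_mem _ _ (subset_span ⟨g a, ⟨a, ⟨ha, hFa⟩, rfl⟩, rfl⟩)
  · rintro _ ⟨_, ⟨a, ⟨ha, hFa⟩, rfl⟩, rfl⟩
    show single (g a) (1 : K) ∈ _
    rw [← inv_mul_cancel₀ hFa, ← smul_single']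
    exact smul_mem _ _ (subset_span ⟨a, ha, rfl⟩)

end SpanOfSingles

theorem image_add_right_sep_eq_iff {G : Type*} [AddGroup G] (E : Set G) (p : G → Prop) (v : G) :
    (· + v) '' {a ∈ E | ¬ p a} = E ↔
      {a | a + v ∈ E} ⊆ E ∧ E ∩ {a | p a} = E \ {a | a + v ∈ E} := by
  have htranslate : ∀ T : Set G, (· + v) '' T = E ↔ T = {a | a + v ∈ E} := fun T => by
    constructor
    · rintro rfl
      exact (Set.preimage_image_eq T (add_left_injective v)).symm
    · rintro rfl
      exact Set.image_preimage_eq E (add_right_surjective v)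
  rw [htranslate]
  simp only [Set.ext_iff, Set.subset_def, Set.mem_inter_iff, Set.mem_sdiff,
    Set.mem_ofPred_eq, ← forall_and]
  exact forall_congr' fun a => by tauto

theorem nonneg_of_forall_add_nsmul_nonneg {M : Type*} [AddCommGroup M] [LinearOrder M]
    [IsOrderedAddMonoid M] [Archimedean M] {x y : M} (h : ∀ n : ℕ, 0 ≤ x + n • y) : 0 ≤ y := by
  by_contra! hy
  obtain ⟨n, hn⟩ := exists_lt_nsmul (neg_pos.mpr hy) x
  rw [smul_neg, lt_neg_iff_add_neg] at hn
  exact (h n).not_gt hn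

/-- Iterating `E - v ⊆ E` would otherwise push `E` out of `S` along some `h i`. -/
theorem preimage_add_subset_iff_neg_mem {ι M : Type*} [AddCommGroup M] (h : ι → M →ₗ[ℤ] ℤ)
    {S E : Set M} (hS : ∀ a, a ∈ S ↔ ∀ i, 0 ≤ h i a) (hES : E ⊆ S)
    (hclosed : ∀ a ∈ E, ∀ s ∈ S, a + s ∈ E) (hNe : E.Nonempty) (v : M) :
    {a | a + v ∈ E} ⊆ E ↔ -v ∈ S := by
  constructor
  · intro hsub
    obtain ⟨b, hb⟩ := hNe
    have hiter : ∀ n : ℕ, b + n • -v ∈ E := by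
      intro n
      induction n with
      | zero => simpa using hb
      | succ n ih => exact hsub (by simpa [succ_nsmul, add_assoc] using ih)
    rw [hS]
    intro i
    exact nonneg_of_forall_add_nsmul_nonneg fun n => by
      simpa using (hS _).mp (hES (hiter n)) i
  · intro hv a ha
    simpa using hclosed _ ha _ hv

theorem delta_fixed_iff_general (d m : ℕ) (h : Fin m → ((Fin d → ℤ) →ₗ[ℤ] ℤ))
    (S : Set (Fin d → ℤ)) (hS : ∀ a, a ∈ S ↔ ∀ i, 0 ≤ h i a)
    (E : Set (Fin d → ℤ)) (hES : E ⊆ S)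
    (hclosed : ∀ a ∈ E, ∀ s ∈ S, a + s ∈ E)
    (hNe : E.Nonempty)
    (dv : Fin d → ℤ) (f : MvPolynomial (Fin d) ℂ) :
    Submodule.span ℂ ((fun a => Finsupp.single (a + dv)
          (MvPolynomial.eval (fun i => ((a i : ℤ) : ℂ)) f) :
        (Fin d → ℤ) → ((Fin d → ℤ) →₀ ℂ)) '' E) =
      Submodule.span ℂ ((fun a => Finsupp.single a (1 : ℂ) :
        (Fin d → ℤ) → ((Fin d → ℤ) →₀ ℂ)) '' E) ↔
      (-dv ∈ S ∧
        E ∩ {a | MvPolynomial.eval (fun i => ((a i : ℤ) : ℂ)) f = 0} =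
          E \ {a | a + dv ∈ E}) := by
  rw [span_single_image_eq_span_single_one, span_single_one_image_inj,
    ← preimage_add_subset_iff_neg_mem h hS hES hclosed hNe]
  exact image_add_right_sep_eq_iff E _ dv

/-- δ(I) = I iff -d ∈ S and Exp I ∩ V_mon(f) = Exp I \ (Exp I - d). -/
theorem delta_fixed_iff (d m : ℕ) (h : Fin m → ((Fin d → ℤ) →ₗ[ℤ] ℤ))
    (S : Set (Fin d → ℤ)) (hS : ∀ a, a ∈ S ↔ ∀ i, 0 ≤ h i a)
    (hconv : ∀ a ∈ S, -a ∈ S → a = 0)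
    (E : Set (Fin d → ℤ)) (hES : E ⊆ S)
    (hclosed : ∀ a ∈ E, ∀ s ∈ S, a + s ∈ E)
    (hNe : E.Nonempty) (hproper : E ≠ S)
    (dv : Fin d → ℤ) (f : MvPolynomial (Fin d) ℂ) :
    Submodule.span ℂ ((fun a => Finsupp.single (a + dv)
          (MvPolynomial.eval (fun i => ((a i : ℤ) : ℂ)) f) :
        (Fin d → ℤ) → ((Fin d → ℤ) →₀ ℂ)) '' E) =
      Submodule.span ℂ ((fun a => Finsupp.single a (1 : ℂ) :
        (Fin d → ℤ) → ((Fin d → ℤ) →₀ ℂ)) '' E) ↔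
      (-dv ∈ S ∧
        E ∩ {a | MvPolynomial.eval (fun i => ((a i : ℤ) : ℂ)) f = 0} =
          E \ {a | a + dv ∈ E}) :=
  delta_fixed_iff_general d m h S hS E hES hclosed hNe dv f
end

section
/- Let h_1, …, h_m be the primitive support linear forms of the cone σ^∨ (so 𝐚 ∈ S iff h_i(𝐚) ≥ 0 for all i, for 𝐚 ∈ ℤ^d), let 𝐝 ∈ ℤ^d with −𝐝 ∈ S, and define H_𝐝(𝐚) = ∏_i ∏_{k=0}^{h_i(−𝐝)−1} (h_i(𝐚) − k). Then for 𝐚 ∈ S: H_𝐝(𝐚) > 0 if and only if 𝐚 + 𝐝 ∈ S, and H_𝐝(𝐚) = 0 otherwise. -/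
/-! For `h i a ≥ 0` the inner product is the descending factorial `(h i a).descFactorial (h i (-𝐝))`
of natural numbers, which is positive exactly when `h i (-𝐝) ≤ h i a`, i.e. when `h i (a + 𝐝) ≥ 0`,
and vanishes otherwise. So `H_𝐝(a)` is a product of natural numbers, positive iff every factor is. -/

open Finset

lemma Int.prod_range_sub_eq_descFactorial {x : ℤ} (hx : 0 ≤ x) (n : ℕ) :
    ∏ k ∈ Finset.range n, (x - (k : ℤ)) = (x.toNat.descFactorial n : ℤ) := by
  rw [← descPochhammer_eval_eq_descFactorial, descPochhammer_eval_eq_prod_range,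
    Int.toNat_of_nonneg hx]

theorem Hd_pos_iff_general (d m : ℕ) (h : Fin m → ((Fin d → ℤ) →ₗ[ℤ] ℤ))
    (S : Set (Fin d → ℤ)) (hS : ∀ a, a ∈ S ↔ ∀ i, 0 ≤ h i a)
    (dv : Fin d → ℤ) (a : Fin d → ℤ) (ha : a ∈ S) :
    (0 < ∏ i, ∏ k ∈ Finset.range (h i (-dv)).toNat, (h i a - (k : ℤ)) ↔ a + dv ∈ S) ∧
    (a + dv ∉ S → ∏ i, ∏ k ∈ Finset.range (h i (-dv)).toNat, (h i a - (k : ℤ)) = 0) := by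
  have haS : ∀ i, 0 ≤ h i a := (hS a).mp ha
  have hH : ∏ i, ∏ k ∈ range (h i (-dv)).toNat, (h i a - (k : ℤ)) =
      ((∏ i, (h i a).toNat.descFactorial (h i (-dv)).toNat : ℕ) : ℤ) := by
    push_cast
    exact prod_congr rfl fun i _ => Int.prod_range_sub_eq_descFactorial (haS i) _
  have hmem : a + dv ∈ S ↔ ∀ i, (h i (-dv)).toNat ≤ (h i a).toNat := by
    rw [hS]
    refine forall_congr' fun i => ?_
    rw [map_add, map_neg]
    have := haS i
    omega
  have hpos : 0 < ∏ i, ∏ k ∈ range (h i (-dv)).toNat, (h i a - (k : ℤ)) ↔ a + dv ∈ S := by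
    simp only [hH, Nat.cast_pos, CanonicallyOrderedAdd.prod_pos, mem_univ, true_implies,
      Nat.descFactorial_pos, hmem]
  refine ⟨hpos, fun hnot => ?_⟩
  have hnot_pos := hpos.not.mpr hnot
  rw [hH] at hnot_pos ⊢
  omega

/-- for a ∈ S, H_d(a) > 0 iff a + d ∈ S, and H_d(a) = 0 otherwise. -/
theorem Hd_pos_iff (d m : ℕ) (h : Fin m → ((Fin d → ℤ) →ₗ[ℤ] ℤ))
    (S : Set (Fin d → ℤ)) (hS : ∀ a, a ∈ S ↔ ∀ i, 0 ≤ h i a)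
    (dv : Fin d → ℤ) (hdS : -dv ∈ S) (a : Fin d → ℤ) (ha : a ∈ S) :
    (0 < ∏ i, ∏ k ∈ Finset.range (h i (-dv)).toNat, (h i a - (k : ℤ)) ↔ a + dv ∈ S) ∧
    (a + dv ∉ S → ∏ i, ∏ k ∈ Finset.range (h i (-dv)).toNat, (h i a - (k : ℤ)) = 0) :=
  Hd_pos_iff_general d m h S hS dv a ha
end

section
/- For every proper nonzero monomial ideal I of a normal affine semigroup ring ℂ[S] and every 𝐝 with −𝐝 ∈ S, there exists a polynomial f divisible by H_𝐝 such that the operator δ = x^𝐝 f(θ) fixes I, i.e. δ(I) = I. Explicitly, if I = (x^{𝐚_1},…,x^{𝐚_m}), then f = Σ_i H_{𝐝 − 𝐚_i} works. -/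
/-!
On `S`, each factor of `H_e(a)` is a falling factorial `(h_i(a))_{h_i(-e)}` of a natural number, so
`H_e(a) ≥ 0`, with `H_e(a) ≠ 0` exactly when `h_i(a) ≥ h_i(-e)` for all `i`, i.e. when `a + e ∈ S`.
Hence for `a ∈ Exp I` the sum `Σ_j H_{d - a_j}(a)` of nonnegative terms vanishes iff
`a + d - a_j ∉ S` for every `j`, i.e. iff `a + d ∉ Exp I`. Divisibility by `H_d` holds termwise,
since `h_i(-(d - a_j)) ≥ h_i(-d)` and a falling factorial divides every longer one with the same top.
-/

/-- The polynomial `H_e` of the Saito-Travis description, as an integer-valued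
function on the lattice: `H_e(a) = ∏_i (h_i(a), h_i(-e)-1)!`. -/
def Hfun (d m : ℕ) (h : Fin m → ((Fin d → ℤ) →ₗ[ℤ] ℤ)) (e : Fin d → ℤ)
    (a : Fin d → ℤ) : ℤ :=
  ∏ i, ∏ k ∈ Finset.range (h i (-e)).toNat, (h i a - (k : ℤ))

open Finset

lemma prod_range_natCast_sub (n N : ℕ) :
    ∏ k ∈ range N, ((n : ℤ) - k) = n.descFactorial N := by
  rw [← descPochhammer_eval_eq_prod_range, descPochhammer_eval_eq_descFactorial]

lemma mem_iUnion_add_iff {M ι : Type*} [AddCommGroup M] (S : Set M) (v : ι → M) (x : M) :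
    x ∈ ⋃ j, {y | ∃ s ∈ S, y = v j + s} ↔ ∃ j, x - v j ∈ S := by
  simp only [Set.mem_iUnion, Set.mem_ofPred_eq, eq_comm (a := x), ← eq_sub_iff_add_eq',
    exists_eq_right]

section Hfun

variable {d m : ℕ} (h : Fin m → ((Fin d → ℤ) →ₗ[ℤ] ℤ)) {e a : Fin d → ℤ}

lemma Hfun_eq_prod_descFactorial (ha : ∀ i, 0 ≤ h i a) :
    Hfun d m h e a = ∏ i, ((h i a).toNat.descFactorial (h i (-e)).toNat : ℤ) := by
  refine prod_congr rfl fun i _ => ?_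
  rw [← prod_range_natCast_sub, Int.toNat_of_nonneg (ha i)]

lemma Hfun_nonneg (ha : ∀ i, 0 ≤ h i a) : 0 ≤ Hfun d m h e a := by
  rw [Hfun_eq_prod_descFactorial h ha]
  positivity

lemma Hfun_ne_zero_iff (ha : ∀ i, 0 ≤ h i a) :
    Hfun d m h e a ≠ 0 ↔ ∀ i, 0 ≤ h i (a + e) := by
  simp only [Hfun_eq_prod_descFactorial h ha, ne_eq, prod_eq_zero_iff, mem_univ, true_and,
    Nat.cast_eq_zero, Nat.descFactorial_eq_zero_iff_lt, not_exists, not_lt, map_add, map_neg]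
  refine forall_congr' fun i => ?_
  have := ha i
  omega

lemma Hfun_dvd_Hfun_sub {b : Fin d → ℤ} (hb : ∀ i, 0 ≤ h i b) :
    Hfun d m h e a ∣ Hfun d m h (e - b) a := by
  refine prod_dvd_prod_of_dvd _ _ fun i _ => prod_dvd_prod_of_subset _ _ _ ?_
  refine range_subset_range.mpr (Int.toNat_le_toNat ?_)
  simp only [neg_sub, map_sub, map_neg]
  linarith [hb i]

end Hfun

theorem exists_fixing_operator_general (d m : ℕ) (h : Fin m → ((Fin d → ℤ) →ₗ[ℤ] ℤ))
    (S : Set (Fin d → ℤ)) (hS : ∀ a, a ∈ S ↔ ∀ i, 0 ≤ h i a)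
    (dv : Fin d → ℤ)
    (mI : ℕ) (av : Fin mI → Fin d → ℤ) (hav : ∀ j, av j ∈ S)
    (E : Set (Fin d → ℤ)) (hE : E = ⋃ j, {x | ∃ s ∈ S, x = av j + s}) :
    (∃ g : (Fin d → ℤ) → ℤ,
        ∀ a, (∑ j, Hfun d m h (dv - av j) a) = Hfun d m h dv a * g a) ∧
      E ∩ {a | (∑ j, Hfun d m h (dv - av j) a) = 0} = E \ {a | a + dv ∈ E} := by
  have hmemE : ∀ x, x ∈ E ↔ ∃ j, x - av j ∈ S := fun x => hE ▸ mem_iUnion_add_iff S av x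
  refine ⟨?_, Set.ext fun a => and_congr_right fun haE => ?_⟩
  · choose g hg using fun a =>
      dvd_sum fun j (_ : j ∈ univ) => Hfun_dvd_Hfun_sub h (e := dv) (a := a) ((hS _).mp (hav j))
    exact ⟨g, hg⟩
  have ha : ∀ i, 0 ≤ h i a := by
    obtain ⟨j, hj⟩ := (hmemE a).mp haE
    intro i
    simpa using add_nonneg ((hS _).mp (hav j) i) ((hS _).mp hj i)
  simp only [Set.mem_ofPred_eq, sum_eq_zero_iff_of_nonneg fun j _ => Hfun_nonneg h ha, mem_univ,
    true_implies, hmemE, not_exists]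
  refine forall_congr' fun j => ?_
  rw [← not_iff_not, not_not, ← ne_eq, Hfun_ne_zero_iff h ha, hS, add_sub_assoc]

/-- for every proper nonzero monomial ideal I = (x^{a_1},...,x^{a_m})
and -d ∈ S, the function f = Σ_j H_{d - a_j} is divisible by H_d and the operator
x^d f(θ) fixes I, i.e. (using the characterization of δ(I) = I given -d ∈ S)
Exp I ∩ {f = 0} = Exp I \ (Exp I - d). -/
theorem exists_fixing_operator (d m : ℕ) (h : Fin m → ((Fin d → ℤ) →ₗ[ℤ] ℤ))
    (S : Set (Fin d → ℤ)) (hS : ∀ a, a ∈ S ↔ ∀ i, 0 ≤ h i a)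
    (dv : Fin d → ℤ) (hdS : -dv ∈ S)
    (mI : ℕ) (hmI : 0 < mI) (av : Fin mI → Fin d → ℤ) (hav : ∀ j, av j ∈ S)
    (E : Set (Fin d → ℤ)) (hE : E = ⋃ j, {x | ∃ s ∈ S, x = av j + s})
    (hproper : E ≠ S) :
    (∃ g : (Fin d → ℤ) → ℤ,
        ∀ a, (∑ j, Hfun d m h (dv - av j) a) = Hfun d m h dv a * g a) ∧
      E ∩ {a | (∑ j, Hfun d m h (dv - av j) a) = 0} = E \ {a | a + dv ∈ E} :=
  exists_fixing_operator_general d m h S hS dv mI av hav E hE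
end

section
/- Suppose δ = x^𝐝 f(θ) is a differential operator on R = ℂ[S] (meaning δ(x^𝐚) = f(𝐚)x^{𝐚+𝐝} ∈ R for all 𝐚 ∈ S) with 𝐝 ≠ 0 and −𝐝 ∈ S. Then for every 𝐚 ∈ S, val(𝐚) < ∞, i.e. there exists t ∈ (1/q)ℤ with 𝐚 + t𝐝 ∈ ℤ^d and f(𝐚 + t𝐝) = 0. -/
/-- if δ = x^d f(θ) is an operator on R = ℂ[S] (i.e. f(a) ≠ 0 implies
a + d ∈ S for a ∈ S), with d ≠ 0, -d ∈ S, and d = q•e with e primitive and q > 0,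
then for every a ∈ S there is a lattice point a + n•e (i.e. a + (n/q)•d with
n/q ∈ (1/q)ℤ) in the vanishing locus of f. -/
theorem val_finite (d m : ℕ) (h : Fin m → ((Fin d → ℤ) →ₗ[ℤ] ℤ))
    (S : Set (Fin d → ℤ)) (hS : ∀ a, a ∈ S ↔ ∀ i, 0 ≤ h i a)
    (hconv : ∀ a ∈ S, -a ∈ S → a = 0)
    (dv ev : Fin d → ℤ) (q : ℕ) (hq : 0 < q) (hde : dv = (q : ℤ) • ev)
    (hprim : IsUnit (Finset.univ.gcd fun i => ev i))
    (hd0 : dv ≠ 0) (hdS : -dv ∈ S)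
    (f : MvPolynomial (Fin d) ℂ)
    (hop : ∀ a ∈ S, MvPolynomial.eval (fun i => ((a i : ℤ) : ℂ)) f ≠ 0 → a + dv ∈ S) :
    ∀ a ∈ S, ∃ n : ℤ,
      MvPolynomial.eval (fun i => ((a i + n * ev i : ℤ) : ℂ)) f = 0 := by
  intro a ha
  by_contra hn
  push_neg at hn
  -- find i with h i dv < 0
  obtain ⟨i, hi⟩ : ∃ i, h i dv < 0 := by
    by_contra hc
    push_neg at hc
    have hdvS : dv ∈ S := (hS dv).2 hc
    exact hd0 (hconv dv hdvS hdS)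
  -- by induction a + k • dv ∈ S for all k : ℕ
  have key : ∀ k : ℕ, (a + (k : ℤ) • dv) ∈ S := by
    intro k
    induction k with
    | zero => simpa using ha
    | succ k ih =>
      have hne : MvPolynomial.eval
          (fun j => (((a + (k : ℤ) • dv) j : ℤ) : ℂ)) f ≠ 0 := by
        have := hn ((k : ℤ) * (q : ℤ))
        convert this using 2 with j
        simp [hde, Pi.smul_apply]
        push_cast
        congr 1
        funext j
        ring
      have := hop _ ih hne
      convert this using 1
      funext j
      simp [Pi.smul_apply]
      ring
  -- contradiction with h i
  set c : ℤ := h i a with hc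
  have hk := key ((c.toNat + 1))
  have h1 := ((hS _).1 hk) i
  have h2 : h i (a + ((c.toNat + 1 : ℕ) : ℤ) • dv)
      = c + ((c.toNat + 1 : ℕ) : ℤ) * h i dv := by
    rw [map_add, map_smul, smul_eq_mul]
  rw [h2] at h1
  have hle : c ≤ ((c.toNat : ℤ)) := Int.self_le_toNat c
  have hd1 : h i dv ≤ -1 := by omega
  push_cast at h1
  nlinarith [Int.self_le_toNat c, Int.natCast_nonneg (c.toNat)]
end

section
/- Let P_1,…,P_n be σ^∨-closed polyhedra with face data {(g_τ,M_τ)}_{τ∈𝒮_i}, let 𝐝 ∈ ℤ^d with 𝟎 ≠ −𝐝 ∈ S, and set f(𝐚) = Σ_{i=1}^n ∏_{τ∈𝒮_i} (g_τ(𝐚), ⌈M_τ − g_τ(𝐝)⌉ − 1)!. Then for 𝐚 ∈ S: f(𝐚) ≠ 0 if and only if 𝐚 + 𝐝 ∈ ⋃_i P_i. -/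
/-!
A descending factorial `(x, N - 1)! = x (x - 1) ⋯ (x - N + 1)` of a natural number `x` is
nonnegative, and it vanishes exactly when `x < N`. For `a ∈ S` every `g_τ(a)` is a natural
number, so the `i`-th summand is nonnegative and it is nonzero iff
`⌈M_τ - g_τ(d)⌉ ≤ g_τ(a)`, i.e. `M_τ ≤ g_τ(a + d)`, for all `τ ∈ 𝒮_i`: that is, iff
`a + d ∈ P_i`. A sum of nonnegative integers is nonzero iff one of its summands is.
-/

open Finset

namespace Int

theorem prod_range_sub_eq_descFactorial_s14 {x : ℤ} (hx : 0 ≤ x) (N : ℕ) :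
    ∏ k ∈ Finset.range N, (x - k) = (x.toNat.descFactorial N : ℤ) := by
  conv_lhs => rw [← Int.toNat_of_nonneg hx]
  rw [← descPochhammer_eval_eq_prod_range, descPochhammer_eval_eq_descFactorial]

theorem prod_range_sub_nonneg {x : ℤ} (hx : 0 ≤ x) (N : ℕ) :
    0 ≤ ∏ k ∈ Finset.range N, (x - k) := by
  rw [prod_range_sub_eq_descFactorial_s14 hx]
  positivity

theorem prod_range_sub_ne_zero_iff {x : ℤ} (hx : 0 ≤ x) (N : ℕ) :
    ∏ k ∈ Finset.range N, (x - k) ≠ 0 ↔ N ≤ x.toNat := by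
  rw [prod_range_sub_eq_descFactorial_s14 hx, Nat.cast_ne_zero, Ne,
    Nat.descFactorial_eq_zero_iff_lt, not_lt]

theorem toNat_ceil_le_toNat_iff {q : ℚ} {x : ℤ} (hx : 0 ≤ x) :
    ⌈q⌉.toNat ≤ x.toNat ↔ q ≤ x := by
  rw [Int.toNat_le, Int.toNat_of_nonneg hx, Int.ceil_le]

end Int

theorem prod_prod_range_ceil_sub_ne_zero_iff {ι : Type*} [Fintype ι] (x c : ι → ℤ) (M : ι → ℚ)
    (hx : ∀ τ, 0 ≤ x τ) :
    ∏ τ, ∏ k ∈ range ⌈M τ - c τ⌉.toNat, (x τ - k) ≠ 0 ↔ ∀ τ, M τ ≤ ((x τ + c τ : ℤ) : ℚ) := by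
  simp only [prod_ne_zero_iff (s := univ), mem_univ, true_imp_iff]
  refine forall_congr' fun τ => ?_
  rw [Int.prod_range_sub_ne_zero_iff (hx τ),
    Int.toNat_ceil_le_toNat_iff (hx τ), sub_le_iff_le_add, Int.cast_add]

theorem membership_by_operator_general (d n : ℕ)
    (S : Set (Fin d → ℤ))
    (ι : Fin n → Type) [∀ i, Fintype (ι i)]
    (g : ∀ i, ι i → ((Fin d → ℤ) →ₗ[ℤ] ℤ)) (M : ∀ i, ι i → ℚ)
    (P : Fin n → Set (Fin d → ℤ))
    (hface : ∀ i v, v ∈ P i ↔ ∀ τ, M i τ ≤ ((g i τ v : ℤ) : ℚ))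
    (hgpos : ∀ i τ, ∀ b ∈ S, 0 ≤ g i τ b)
    (dv : Fin d → ℤ)
    (a : Fin d → ℤ) (ha : a ∈ S) :
    (∑ i, ∏ τ, ∏ k ∈ Finset.range (⌈M i τ - ((g i τ dv : ℤ) : ℚ)⌉).toNat,
        (g i τ a - (k : ℤ))) ≠ 0 ↔
      a + dv ∈ ⋃ i, P i := by
  have hga : ∀ i τ, 0 ≤ g i τ a := fun i τ => hgpos i τ a ha
  have summand_nonneg : ∀ i, 0 ≤ ∏ τ, ∏ k ∈ range (⌈M i τ - ((g i τ dv : ℤ) : ℚ)⌉).toNat,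
      (g i τ a - (k : ℤ)) :=
    fun i => prod_nonneg fun τ _ => Int.prod_range_sub_nonneg (hga i τ) _
  have summand_ne_zero_iff : ∀ i, ∏ τ, ∏ k ∈ range (⌈M i τ - ((g i τ dv : ℤ) : ℚ)⌉).toNat,
      (g i τ a - (k : ℤ)) ≠ 0 ↔ a + dv ∈ P i := fun i => by
    rw [prod_prod_range_ceil_sub_ne_zero_iff _ _ _ (hga i), hface]
    simp only [map_add]
  rw [Ne, sum_eq_zero_iff_of_nonneg fun i _ => summand_nonneg i, Set.mem_iUnion]
  simp only [mem_univ, true_imp_iff, not_forall]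
  exact exists_congr summand_ne_zero_iff

/-- for σ∨-closed polyhedra P_1, ..., P_n with face data, 0 ≠ -d ∈ S,
and f(a) = Σ_i ∏_τ (g_τ(a), ⌈M_τ - g_τ(d)⌉ - 1)!, one has for a ∈ S that
f(a) ≠ 0 iff a + d ∈ ⋃_i P_i. -/
theorem membership_by_operator (d m n : ℕ)
    (h : Fin m → ((Fin d → ℤ) →ₗ[ℤ] ℤ))
    (S : Set (Fin d → ℤ)) (hS : ∀ a, a ∈ S ↔ ∀ i, 0 ≤ h i a)
    (ι : Fin n → Type) [∀ i, Fintype (ι i)]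
    (g : ∀ i, ι i → ((Fin d → ℤ) →ₗ[ℤ] ℤ)) (M : ∀ i, ι i → ℚ)
    (P : Fin n → Set (Fin d → ℤ))
    (hface : ∀ i v, v ∈ P i ↔ ∀ τ, M i τ ≤ ((g i τ v : ℤ) : ℚ))
    (hgpos : ∀ i τ, ∀ b ∈ S, 0 ≤ g i τ b)
    (dv : Fin d → ℤ) (hd0 : dv ≠ 0) (hdS : -dv ∈ S)
    (a : Fin d → ℤ) (ha : a ∈ S) :
    (∑ i, ∏ τ, ∏ k ∈ Finset.range (⌈M i τ - ((g i τ dv : ℤ) : ℚ)⌉).toNat,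
        (g i τ a - (k : ℤ))) ≠ 0 ↔
      a + dv ∈ ⋃ i, P i :=
  membership_by_operator_general d n S ι g M P hface hgpos dv a ha
end
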